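/- arXiv:1803.01642 — 5 statements merged into one kernel-verified Lean document; each statement's English description precedes it below -/
import Mathlib

section
/- For every natural number k, the real polynomial P₂(X) = 2^{−k−2} · k! · ∑_{j=1}^{k+1} (2X)^j/j! satisfies the identity P₂″(X) − 2·P₂′(X) = −X^k, where P₂′ and P₂″ denote the first and second formal derivatives of P₂. -/
open Polynomial

/-- For a natural number `k`, the polynomial
`P₂(X) = 2^{-k-2} · k! · ∑_{j=1}^{k+1} (2X)^j / j!`. -/
noncomputable def P₂ (k : ℕ) : Polynomial ℝ :=
  C (((2 : ℝ) ^ (k + 2))⁻¹ * (k.factorial : ℝ)) *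
    ∑ j ∈ Finset.Icc 1 (k + 1), C ((j.factorial : ℝ)⁻¹) * (C 2 * X) ^ j

lemma derA (m : ℕ) :
    derivative (∑ j ∈ Finset.range (m+1), C ((j.factorial : ℝ)⁻¹) * (C 2 * X) ^ j) =
      C 2 * ∑ j ∈ Finset.range m, C ((j.factorial : ℝ)⁻¹) * (C 2 * X) ^ j := by
  rw [derivative_sum, Finset.sum_range_succ', Finset.mul_sum]
  simp only [Nat.factorial_zero, Nat.cast_one, inv_one, map_one, pow_zero, mul_one,
    derivative_one, add_zero]
  refine Finset.sum_congr rfl fun j _ => ?_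
  rw [derivative_mul, derivative_C, zero_mul, zero_add, derivative_pow]
  have h : derivative (C (2:ℝ) * X) = C 2 := by simp
  rw [h, Nat.add_sub_cancel]
  have hfac : ((j+1).factorial : ℝ)⁻¹ * (((j:ℕ) + 1 : ℕ) : ℝ) = ((j.factorial : ℝ))⁻¹ := by
    rw [Nat.factorial_succ]
    have h1 : ((j.factorial : ℝ)) ≠ 0 := Nat.cast_ne_zero.mpr j.factorial_ne_zero
    push_cast
    field_simp
  calc C (((j+1).factorial : ℝ))⁻¹ * (C (((j:ℕ)+1 : ℕ) : ℝ) * (C 2 * X) ^ j * C 2)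
      = C ((((j+1).factorial : ℝ))⁻¹ * (((j:ℕ)+1 : ℕ) : ℝ)) * C 2 * (C 2 * X) ^ j := by
        rw [C_mul]; ring
    _ = C 2 * (C ((j.factorial : ℝ)⁻¹) * (C 2 * X) ^ j) := by rw [hfac]; ring

lemma rangeIcc (m : ℕ) : Finset.range (m + 2) = insert 0 (Finset.Icc 1 (m + 1)) := by
  ext x
  simp [Finset.mem_range, Finset.mem_Icc]
  omega

/-- `P₂″(X) − 2·P₂′(X) = −X^k`. -/
theorem statement1 (k : ℕ) :
    derivative (derivative (P₂ k)) - 2 * derivative (P₂ k) = -(X ^ k) := by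
  have hsum : ∑ j ∈ Finset.Icc 1 (k + 1), C ((j.factorial : ℝ)⁻¹) * (C 2 * X) ^ j
      = (∑ j ∈ Finset.range (k+2), C ((j.factorial : ℝ)⁻¹) * (C 2 * X) ^ j) - C 1 := by
    rw [rangeIcc, Finset.sum_insert (by simp)]
    simp
  have hd1 : derivative (P₂ k)
      = C (((2 : ℝ) ^ (k + 2))⁻¹ * (k.factorial : ℝ)) *
        (C 2 * ∑ j ∈ Finset.range (k+1), C ((j.factorial : ℝ)⁻¹) * (C 2 * X) ^ j) := by
    rw [P₂, derivative_mul, derivative_C, zero_mul, zero_add, hsum, derivative_sub,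
      derivative_C, sub_zero, derA]
  have hd2 : derivative (derivative (P₂ k))
      = C (((2 : ℝ) ^ (k + 2))⁻¹ * (k.factorial : ℝ)) *
        (C 2 * (C 2 * ∑ j ∈ Finset.range k, C ((j.factorial : ℝ)⁻¹) * (C 2 * X) ^ j)) := by
    rw [hd1, derivative_mul, derivative_C, zero_mul, zero_add, derivative_mul, derivative_C,
      zero_mul, zero_add, derA]
  rw [hd2, hd1, Finset.sum_range_succ]
  have hX : (C 2 * X : Polynomial ℝ) ^ k = C ((2:ℝ)^k) * X ^ k := by
    rw [mul_pow, ← C_pow]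
  have h2 : (2 : Polynomial ℝ) = C 2 := by
    rw [show (2:ℝ) = ((2:ℕ):ℝ) by norm_num, C_eq_natCast]; norm_num
  rw [hX, h2, mul_add]
  have hk : ((2:ℝ) ^ (k + 2))⁻¹ * (k.factorial : ℝ) * (2 * (2 * ((k.factorial : ℝ)⁻¹ * 2 ^ k))) = 1 := by
    have h1 : ((k.factorial : ℝ)) ≠ 0 := Nat.cast_ne_zero.mpr k.factorial_ne_zero
    have h2 : ((2:ℝ) ^ (k + 2)) ≠ 0 := by positivity
    field_simp
    ring
  calc C (((2 : ℝ) ^ (k + 2))⁻¹ * (k.factorial : ℝ)) *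
        (C 2 * (C 2 * ∑ j ∈ Finset.range k, C ((j.factorial : ℝ)⁻¹) * (C 2 * X) ^ j)) -
      C 2 * (C (((2 : ℝ) ^ (k + 2))⁻¹ * (k.factorial : ℝ)) *
        (C 2 * ∑ j ∈ Finset.range k, C ((j.factorial : ℝ)⁻¹) * (C 2 * X) ^ j +
         C 2 * (C ((k.factorial : ℝ)⁻¹) * (C ((2:ℝ)^k) * X ^ k))))
      = -(C (((2 : ℝ) ^ (k + 2))⁻¹ * (k.factorial : ℝ) * (2 * (2 * ((k.factorial : ℝ)⁻¹ * 2 ^ k)))) * X ^ k) := by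
        simp only [C_mul]
        ring
    _ = -(X ^ k) := by rw [hk, C_1, one_mul]
end

section
/- Let U ⊆ ℝ³ be open, ν : U → ℝ twice continuously differentiable with |∇ν(x)| = 1 for all x ∈ U, w : U → ℂ³ twice continuously differentiable, P ∈ ℂ[X] a polynomial, z ∈ ℂ, and s = z². Then on U one has the identity (s − Δ)(e^{−zν} · P(zν) · w) = e^{−zν} · [ z² · (2P′ − P″)(zν) · w − z · (P′ − P)(zν) · ( (Δν)·w + 2·∑_{j=1}^{3} (∂_j ν)·(∂_j w) ) − P(zν) · Δw ]. -/
/-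
Write the function as `φ • w` with `φ = g ∘ ν` and `g t = e^{-zt} P(zt)`. Differentiating
`e^{-zt} Q(zt)` gives `e^{-zt} (z (Q' - Q))(zt)`, so `g'` and `g''` are of the same shape, with
`Q = z (P' - P)` and `Q = z² (P'' - 2P' + P)`. The Leibniz rule
`Δ(φ w) = Δφ w + 2 ∑ⱼ ∂ⱼφ ∂ⱼw + φ Δw` and the chain rule `Δ(g ∘ ν) = g'(ν) Δν + g''(ν) |∇ν|²`
then give the identity; `|∇ν| = 1` is what makes the `z² P` part of `g''` cancel against `s`.
-/

open Polynomial

/-- The Laplacian `Δf = ∑_{j=1}^{3} ∂²f/∂x_j²` of a function on `ℝ³`,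
acting componentwise on vector-valued functions. -/
noncomputable def lap {F : Type*} [NormedAddCommGroup F] [NormedSpace ℝ F]
    (f : EuclideanSpace ℝ (Fin 3) → F) (x : EuclideanSpace ℝ (Fin 3)) : F :=
  ∑ i : Fin 3,
    fderiv ℝ (fun y => fderiv ℝ f y (EuclideanSpace.single i 1)) x (EuclideanSpace.single i 1)

noncomputable def expPoly (z : ℂ) (Q : ℂ[X]) (t : ℝ) : ℂ :=
  Complex.exp (-z * t) * Q.eval (z * t)

lemma hasDerivAt_expPoly (z : ℂ) (Q : ℂ[X]) (t : ℝ) :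
    HasDerivAt (expPoly z Q) (expPoly z (C z * (derivative Q - Q)) t) t := by
  have hexp : HasDerivAt (fun u : ℂ => Complex.exp (-z * u)) (Complex.exp (-z * t) * -z) t := by
    simpa using ((hasDerivAt_id (t : ℂ)).const_mul (-z)).cexp
  have heval : HasDerivAt (fun u : ℂ => Q.eval (z * u)) ((derivative Q).eval (z * t) * z) t :=
    (Q.hasDerivAt (z * t)).comp (t : ℂ) (by simpa using (hasDerivAt_id (t : ℂ)).const_mul z)
  refine (hexp.mul heval).comp_ofReal.congr_deriv ?_
  simp only [expPoly, eval_mul, eval_sub, eval_C]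
  ring

lemma deriv_expPoly (z : ℂ) (Q : ℂ[X]) :
    deriv (expPoly z Q) = expPoly z (C z * (derivative Q - Q)) :=
  funext fun t => (hasDerivAt_expPoly z Q t).deriv

lemma contDiff_expPoly (z : ℂ) (n : ℕ) : ∀ Q : ℂ[X], ContDiff ℝ n (expPoly z Q) := by
  induction n with
  | zero =>
    exact fun Q => contDiff_zero.2 <| continuous_iff_continuousAt.2 fun t =>
      (hasDerivAt_expPoly z Q t).continuousAt
  | succ n ih =>
    intro Q
    rw [Nat.cast_succ, contDiff_succ_iff_deriv, deriv_expPoly]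
    exact ⟨fun t => (hasDerivAt_expPoly z Q t).differentiableAt, by simp, ih _⟩

section SecondDerivatives

variable {E F : Type*} [NormedAddCommGroup E] [NormedSpace ℝ E]
  [NormedAddCommGroup F] [NormedSpace ℝ F]

lemma fderiv_comp_apply_eq_smul_deriv {g : ℝ → F} {ν : E → ℝ} {y : E}
    (hg : DifferentiableAt ℝ g (ν y)) (hν : DifferentiableAt ℝ ν y) (v : E) :
    fderiv ℝ (fun y => g (ν y)) y v = fderiv ℝ ν y v • deriv g (ν y) := by
  rw [show (fun y => g (ν y)) = g ∘ ν from rfl, fderiv_comp y hg hν,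
    ContinuousLinearMap.comp_apply, fderiv_eq_smul_deriv]

lemma fderiv_smul_apply {𝕜 : Type*} [NontriviallyNormedField 𝕜] [NormedAlgebra ℝ 𝕜]
    [NormedSpace 𝕜 F] [IsScalarTower ℝ 𝕜 F] {c : E → 𝕜} {f : E → F} {y : E}
    (hc : DifferentiableAt ℝ c y) (hf : DifferentiableAt ℝ f y) (v : E) :
    fderiv ℝ (fun y => c y • f y) y v = c y • fderiv ℝ f y v + fderiv ℝ c y v • f y := by
  simp [fderiv_fun_smul hc hf]

lemma ContDiffAt.differentiableAt_fderiv_apply {n : WithTop ℕ∞} {f : E → F} {x : E}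
    (hf : ContDiffAt ℝ n f x) (hn : 2 ≤ n) (v : E) :
    DifferentiableAt ℝ (fun y => fderiv ℝ f y v) x :=
  ((hf.fderiv_right (m := 1) hn).differentiableAt one_ne_zero).clm_apply
    (differentiableAt_const v)

lemma ContDiffAt.eventually_differentiableAt {n : WithTop ℕ∞} {f : E → F} {x : E}
    (hf : ContDiffAt ℝ n f x) (hn : 1 ≤ n) :
    ∀ᶠ y in nhds x, DifferentiableAt ℝ f y :=
  ((hf.of_le hn).eventually (by simp)).mono fun _ hy => hy.differentiableAt one_ne_zero

lemma fderiv_fderiv_smul_apply {𝕜 : Type*} [NontriviallyNormedField 𝕜] [NormedAlgebra ℝ 𝕜]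
    [NormedSpace 𝕜 F] [IsScalarTower ℝ 𝕜 F] {c : E → 𝕜} {f : E → F} {x : E}
    (hc : ContDiffAt ℝ 2 c x) (hf : ContDiffAt ℝ 2 f x) (v : E) :
    fderiv ℝ (fun y => fderiv ℝ (fun y => c y • f y) y v) x v
      = fderiv ℝ (fun y => fderiv ℝ c y v) x v • f x
        + 2 • (fderiv ℝ c x v • fderiv ℝ f x v)
        + c x • fderiv ℝ (fun y => fderiv ℝ f y v) x v := by
  have hfirst : (fun y => fderiv ℝ (fun y => c y • f y) y v)
      =ᶠ[nhds x] fun y => c y • fderiv ℝ f y v + fderiv ℝ c y v • f y := by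
    filter_upwards [hc.eventually_differentiableAt one_le_two,
      hf.eventually_differentiableAt one_le_two]
      with y hcy hfy using fderiv_smul_apply hcy hfy v
  have hc1 := hc.differentiableAt two_ne_zero
  have hf1 := hf.differentiableAt two_ne_zero
  have hc2 := hc.differentiableAt_fderiv_apply le_rfl v
  have hf2 := hf.differentiableAt_fderiv_apply le_rfl v
  rw [hfirst.fderiv_eq, fderiv_fun_add (hc1.fun_smul hf2) (hc2.fun_smul hf1), add_apply,
    fderiv_smul_apply hc1 hf2, fderiv_smul_apply hc2 hf1]
  module

lemma fderiv_fderiv_comp_apply {g : ℝ → F} {ν : E → ℝ} {x : E}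
    (hg : ContDiff ℝ 2 g) (hν : ContDiffAt ℝ 2 ν x) (v : E) :
    fderiv ℝ (fun y => fderiv ℝ (fun y => g (ν y)) y v) x v
      = fderiv ℝ (fun y => fderiv ℝ ν y v) x v • deriv g (ν x)
        + (fderiv ℝ ν x v) ^ 2 • deriv (deriv g) (ν x) := by
  have hg1 : Differentiable ℝ g := hg.differentiable two_ne_zero
  have hg2 : Differentiable ℝ (deriv g) := hg.differentiable_deriv_two
  have hfirst : (fun y => fderiv ℝ (fun y => g (ν y)) y v)
      =ᶠ[nhds x] fun y => fderiv ℝ ν y v • deriv g (ν y) := by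
    filter_upwards [hν.eventually_differentiableAt one_le_two] with y hy
      using fderiv_comp_apply_eq_smul_deriv (hg1 _) hy v
  have hν1 := hν.differentiableAt two_ne_zero
  rw [hfirst.fderiv_eq, fderiv_smul_apply (f := fun y => deriv g (ν y))
    (hν.differentiableAt_fderiv_apply le_rfl v) (hg2.differentiableAt.comp x hν1),
    fderiv_comp_apply_eq_smul_deriv (hg2 _) hν1]
  module

end SecondDerivatives

lemma sum_fderiv_single_sq_eq_norm_gradient_sq {ι : Type*} [Fintype ι] [DecidableEq ι]
    (f : EuclideanSpace ℝ ι → ℝ) (x : EuclideanSpace ℝ ι) :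
    ∑ j, (fderiv ℝ f x (EuclideanSpace.single j 1)) ^ 2 = ‖gradient f x‖ ^ 2 := by
  have hpartial (j : ι) : fderiv ℝ f x (EuclideanSpace.single j 1) = gradient f x j := by
    rw [gradient, ← InnerProductSpace.toDual_symm_apply, EuclideanSpace.inner_single_right]
    simp
  simp [EuclideanSpace.norm_sq_eq, hpartial]

section Laplacian

variable {F : Type*} [NormedAddCommGroup F] [NormedSpace ℝ F] {x : EuclideanSpace ℝ (Fin 3)}

lemma lap_smul {𝕜 : Type*} [NontriviallyNormedField 𝕜] [NormedAlgebra ℝ 𝕜]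
    [NormedSpace 𝕜 F] [IsScalarTower ℝ 𝕜 F] {c : EuclideanSpace ℝ (Fin 3) → 𝕜}
    {f : EuclideanSpace ℝ (Fin 3) → F} (hc : ContDiffAt ℝ 2 c x) (hf : ContDiffAt ℝ 2 f x) :
    lap (fun y => c y • f y) x
      = lap c x • f x
        + 2 • ∑ j, fderiv ℝ c x (EuclideanSpace.single j 1) •
            fderiv ℝ f x (EuclideanSpace.single j 1)
        + c x • lap f x := by
  simp only [lap, fderiv_fderiv_smul_apply hc hf, Finset.sum_add_distrib, Finset.sum_smul,
    Finset.smul_sum]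

lemma lap_comp {g : ℝ → F} {ν : EuclideanSpace ℝ (Fin 3) → ℝ}
    (hg : ContDiff ℝ 2 g) (hν : ContDiffAt ℝ 2 ν x) :
    lap (fun y => g (ν y)) x
      = lap ν x • deriv g (ν x) + ‖gradient ν x‖ ^ 2 • deriv (deriv g) (ν x) := by
  simp only [lap, fderiv_fderiv_comp_apply hg hν, Finset.sum_add_distrib, Finset.sum_smul,
    ← sum_fderiv_single_sq_eq_norm_gradient_sq]

end Laplacian

/-- for `ν : U → ℝ` of class `C²` with `|∇ν| = 1` on `U`, `w : U → ℂ³` of class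
`C²`, a polynomial `P ∈ ℂ[X]`, `z ∈ ℂ` and `s = z²`, on `U` one has
`(s − Δ)(e^{−zν} · P(zν) · w)
  = e^{−zν} · [ z²·(2P′ − P″)(zν)·w − z·(P′ − P)(zν)·((Δν)·w + 2·∑_j (∂_j ν)·(∂_j w))
      − P(zν)·Δw ]`. -/
theorem statement7
    (U : Set (EuclideanSpace ℝ (Fin 3))) (hU : IsOpen U)
    (ν : EuclideanSpace ℝ (Fin 3) → ℝ)
    (hν : ContDiffOn ℝ 2 ν U)
    (hgrad : ∀ x ∈ U, ‖gradient ν x‖ = 1)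
    (w : EuclideanSpace ℝ (Fin 3) → EuclideanSpace ℂ (Fin 3))
    (hw : ContDiffOn ℝ 2 w U)
    (P : Polynomial ℂ) (z s : ℂ) (hs : s = z ^ 2)
    (x : EuclideanSpace ℝ (Fin 3)) (hx : x ∈ U) :
    s • (Complex.exp (-z * (ν x : ℂ)) • (P.eval (z * (ν x : ℂ))) • w x)
        - lap (fun y => Complex.exp (-z * (ν y : ℂ)) • (P.eval (z * (ν y : ℂ))) • w y) x
      = Complex.exp (-z * (ν x : ℂ)) •
          ((z ^ 2 * (2 * derivative P - derivative (derivative P)).eval (z * (ν x : ℂ))) • w x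
            - (z * (derivative P - P).eval (z * (ν x : ℂ))) •
                (((lap ν x : ℝ) : ℂ) • w x
                  + (2 : ℂ) • ∑ j : Fin 3,
                      ((fderiv ℝ ν x (EuclideanSpace.single j 1) : ℝ) : ℂ) •
                        fderiv ℝ w x (EuclideanSpace.single j 1))
            - (P.eval (z * (ν x : ℂ))) • lap w x) := by
  have hν2 : ContDiffAt ℝ 2 ν x := hν.contDiffAt (hU.mem_nhds hx)
  have hw2 : ContDiffAt ℝ 2 w x := hw.contDiffAt (hU.mem_nhds hx)
  have hg : ContDiff ℝ 2 (expPoly z P) := contDiff_expPoly z 2 P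
  have hprofile : (fun y => Complex.exp (-z * (ν y : ℂ)) • (P.eval (z * (ν y : ℂ))) • w y)
      = fun y => expPoly z P (ν y) • w y :=
    funext fun y => smul_smul _ _ _
  have hcross : ∑ j : Fin 3, fderiv ℝ (fun y => expPoly z P (ν y)) x (EuclideanSpace.single j 1)
        • fderiv ℝ w x (EuclideanSpace.single j 1)
      = deriv (expPoly z P) (ν x) • ∑ j : Fin 3,
          ((fderiv ℝ ν x (EuclideanSpace.single j 1) : ℝ) : ℂ) •
            fderiv ℝ w x (EuclideanSpace.single j 1) := by
    simp only [fderiv_comp_apply_eq_smul_deriv (hg.differentiable two_ne_zero _)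
      (hν2.differentiableAt two_ne_zero), Finset.smul_sum, smul_smul, Complex.real_smul,
      mul_comm]
  rw [hprofile, lap_smul (c := fun y => expPoly z P (ν y)) (hg.comp_contDiffAt x hν2) hw2,
    lap_comp hg hν2, hgrad x hx, hcross, deriv_expPoly, deriv_expPoly, hs]
  simp only [expPoly, eval_mul, eval_sub, eval_C, derivative_mul, derivative_sub, derivative_C,
    zero_mul, zero_add, eval_ofNat, Complex.real_smul]
  match_scalars <;> ring
end

section
/- Let ψ : ℝ → ℝ be a smooth function with support contained in [0,1] and let ψ̃(s) = ∫_0^1 e^{−st} ψ(t) dt. Then for all natural numbers j and n there exists a constant c_{j,n} > 0, independent of s, such that |ψ̃^{(j)}(s)| ≤ c_{j,n} · |s|^{−n} for every s ∈ ℂ with Re s ≥ 0 and s ≠ 0. -/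
open MeasureTheory intervalIntegral
open scoped ContDiff

noncomputable def laplaceT (ψ : ℝ → ℝ) (s : ℂ) : ℂ :=
  ∫ t in (0 : ℝ)..1, Complex.exp (-s * t) * (ψ t : ℂ)

section Aux

open Function Set Metric

/-- A continuous function supported in `[0,1]` vanishes at `0`. -/
lemma aux_zero_at_zero {g : ℝ → ℝ} (hg : Continuous g)
    (h : Function.support g ⊆ Set.Icc 0 1) : g 0 = 0 := by
  have h1 : Set.EqOn g 0 (Set.Iio 0) := by
    intro x hx
    by_contra hx0
    exact absurd (h hx0).1 (not_le.mpr hx)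
  have h2 : Set.EqOn g 0 (closure (Set.Iio 0)) :=
    h1.closure hg continuous_const
  simpa using h2 (by simp [closure_Iio] : (0:ℝ) ∈ closure (Set.Iio (0:ℝ)))

lemma aux_zero_at_one {g : ℝ → ℝ} (hg : Continuous g)
    (h : Function.support g ⊆ Set.Icc 0 1) : g 1 = 0 := by
  have h1 : Set.EqOn g 0 (Set.Ioi 1) := by
    intro x hx
    by_contra hx0
    exact absurd (h hx0).2 (not_le.mpr hx)
  have h2 : Set.EqOn g 0 (closure (Set.Ioi 1)) :=
    h1.closure hg continuous_const
  simpa using h2 (by simp [closure_Ioi] : (1:ℝ) ∈ closure (Set.Ioi (1:ℝ)))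

lemma aux_integrand_cont {g : ℝ → ℝ} (hg : Continuous g) (s : ℂ) :
    Continuous (fun t : ℝ => Complex.exp (-s * t) * (g t : ℂ)) := by
  fun_prop

/-- Basic bound on the Laplace transform. -/
lemma aux_laplace_norm_le {g : ℝ → ℝ} {C : ℝ}
    (hC : ∀ t ∈ Set.Icc (0:ℝ) 1, |g t| ≤ C) {s : ℂ} (hs : 0 ≤ s.re) :
    ‖laplaceT g s‖ ≤ C := by
  have h := intervalIntegral.norm_integral_le_of_norm_le_const (a := (0:ℝ)) (b := 1)
      (C := C) (f := fun t => Complex.exp (-s * t) * (g t : ℂ)) ?_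
  · simpa [laplaceT] using h
  · intro t ht
    rw [Set.uIoc_of_le zero_le_one] at ht
    have ht0 : 0 ≤ t := ht.1.le
    have hre : (-s * (t:ℂ)).re = -(s.re * t) := by simp
    have h1 : ‖Complex.exp (-s * t)‖ ≤ 1 := by
      rw [Complex.norm_exp, hre]
      exact Real.exp_le_one_iff.mpr (by nlinarith)
    have h2 : ‖((g t : ℂ))‖ ≤ C := by
      rw [Complex.norm_real, Real.norm_eq_abs]
      exact hC t ⟨ht0, ht.2⟩
    calc ‖Complex.exp (-s * t) * (g t : ℂ)‖ = ‖Complex.exp (-s * t)‖ * ‖((g t : ℂ))‖ :=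
          norm_mul _ _
      _ ≤ 1 * C := mul_le_mul h1 h2 (norm_nonneg _) zero_le_one
      _ = C := one_mul C

set_option maxHeartbeats 4000000 in
/-- Differentiation under the integral sign. -/
lemma aux_laplace_hasDerivAt {g : ℝ → ℝ} (hg : Continuous g) (s₀ : ℂ) :
    HasDerivAt (laplaceT g) (laplaceT (fun t => -(t * g t)) s₀) s₀ := by
  obtain ⟨C, hC⟩ := isCompact_Icc.exists_bound_of_continuousOn
    (hg.continuousOn : ContinuousOn g (Set.Icc (0:ℝ) 1))
  set μ : Measure ℝ := volume.restrict (Set.Ioc (0:ℝ) 1) with hμ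
  set F : ℂ → ℝ → ℂ := fun s t => Complex.exp (-s * t) * (g t : ℂ) with hF
  set F' : ℂ → ℝ → ℂ := fun s t => Complex.exp (-s * t) * ((-(t * g t) : ℝ) : ℂ) with hF'
  have hF_meas : ∀ᶠ s in nhds s₀, AEStronglyMeasurable (F s) μ :=
    Filter.Eventually.of_forall fun s => (aux_integrand_cont hg s).aestronglyMeasurable
  have hF_int : Integrable (F s₀) μ := (aux_integrand_cont hg s₀).integrableOn_Ioc
  have hF'_cont : ∀ s : ℂ, Continuous (F' s) := fun s =>
    aux_integrand_cont (g := fun t => -(t * g t)) ((continuous_id.mul hg).neg) s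
  have hF'_meas : AEStronglyMeasurable (F' s₀) μ := (hF'_cont s₀).aestronglyMeasurable
  have h_bound : ∀ᵐ t ∂μ, ∀ s ∈ ball s₀ 1, ‖F' s t‖ ≤ Real.exp (‖s₀‖ + 1) * C := by
    rw [ae_restrict_iff' measurableSet_Ioc]
    refine Filter.Eventually.of_forall fun t ht s hsb => ?_
    have ht0 : 0 ≤ t := ht.1.le
    have ht1 : t ≤ 1 := ht.2
    have hgt : |g t| ≤ C := by
      have := hC t ⟨ht0, ht1⟩; rwa [Real.norm_eq_abs] at this
    have hsnorm : ‖s‖ ≤ ‖s₀‖ + 1 := by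
      have : ‖s - s₀‖ < 1 := by rwa [mem_ball, dist_eq_norm] at hsb
      calc ‖s‖ = ‖s₀ + (s - s₀)‖ := by ring_nf
        _ ≤ ‖s₀‖ + ‖s - s₀‖ := norm_add_le _ _
        _ ≤ ‖s₀‖ + 1 := by linarith
    have hre : (-s * (t:ℂ)).re = -(s.re * t) := by simp
    have h1 : ‖Complex.exp (-s * t)‖ ≤ Real.exp (‖s₀‖ + 1) := by
      rw [Complex.norm_exp, hre]
      apply Real.exp_le_exp.mpr
      have habs : |s.re| ≤ ‖s‖ := Complex.abs_re_le_norm s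
      nlinarith [abs_nonneg s.re, neg_abs_le s.re]
    have h2 : ‖((-(t * g t) : ℝ) : ℂ)‖ ≤ C := by
      rw [Complex.norm_real, Real.norm_eq_abs, abs_neg, abs_mul, abs_of_nonneg ht0]
      calc t * |g t| ≤ 1 * |g t| := mul_le_mul_of_nonneg_right ht1 (abs_nonneg _)
        _ = |g t| := one_mul _
        _ ≤ C := hgt
    calc ‖F' s t‖ = ‖Complex.exp (-s * t)‖ * ‖((-(t * g t) : ℝ) : ℂ)‖ := norm_mul _ _
      _ ≤ Real.exp (‖s₀‖ + 1) * C :=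
          mul_le_mul h1 h2 (norm_nonneg _) (Real.exp_pos _).le
  have bound_integrable : Integrable (fun _ : ℝ => Real.exp (‖s₀‖ + 1) * C) μ := by
    rw [hμ]
    exact integrableOn_const measure_Ioc_lt_top.ne
  have h_diff : ∀ᵐ t ∂μ, ∀ s ∈ ball s₀ 1, HasDerivAt (fun s => F s t) (F' s t) s := by
    refine Filter.Eventually.of_forall fun t s _ => ?_
    simp only [hF, hF']
    have h1 : HasDerivAt (fun s : ℂ => -s * (t:ℂ)) (-(t:ℂ)) s := by
      simpa using ((hasDerivAt_id s).neg.mul_const (t:ℂ))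
    have h3 := (h1.cexp).mul_const ((g t : ℂ))
    refine h3.congr_deriv ?_
    simp only [Complex.ofReal_neg, Complex.ofReal_mul]
    ring
  clear_value μ F F'
  obtain ⟨-, hd⟩ := hasDerivAt_integral_of_dominated_loc_of_deriv_le (ball_mem_nhds s₀ zero_lt_one)
    hF_meas hF_int hF'_meas h_bound bound_integrable h_diff
  have e1 : laplaceT g = fun s => ∫ t, F s t ∂μ := by
    rw [hF, hμ]
    funext s
    rw [laplaceT, intervalIntegral.integral_of_le zero_le_one]
  have e2 : laplaceT (fun t => -(t * g t)) s₀ = ∫ t, F' s₀ t ∂μ := by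
    rw [hF', hμ]
    rw [laplaceT, intervalIntegral.integral_of_le zero_le_one]
  rw [e1, e2]
  exact hd

/-- Integration by parts for the Laplace transform. -/
lemma aux_laplace_deriv_eq {g : ℝ → ℝ} (hg : ContDiff ℝ ∞ g)
    (h0 : g 0 = 0) (h1 : g 1 = 0) (s : ℂ) :
    laplaceT (deriv g) s = s * laplaceT g s := by
  have hgPair := contDiff_infty_iff_deriv.mp hg
  have hg' : Continuous (deriv g) := hgPair.2.continuous
  have hgc : Continuous g := hg.continuous
  have key : ∀ t ∈ Set.uIcc (0:ℝ) 1, HasDerivAt (fun t : ℝ => Complex.exp (-s * t) * (g t : ℂ))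
      (Complex.exp (-s * t) * (-s) * (g t : ℂ) + Complex.exp (-s * t) * ((deriv g t : ℝ) : ℂ)) t := by
    intro t _
    have hin : HasDerivAt (fun t : ℝ => -s * (t : ℂ)) (-s) t := by
      simpa using (Complex.ofRealCLM.hasDerivAt (x := t)).const_mul (-s)
    have hA : HasDerivAt (fun t : ℝ => Complex.exp (-s * (t:ℂ))) (Complex.exp (-s * t) * (-s)) t :=
      hin.cexp
    have hB : HasDerivAt (fun t : ℝ => ((g t : ℝ) : ℂ)) ((deriv g t : ℝ) : ℂ) t :=
      ((hgPair.1).differentiableAt.hasDerivAt).ofReal_comp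
    exact hA.mul hB
  have hi1 : IntervalIntegrable (fun t : ℝ => Complex.exp (-s * t) * (-s) * (g t : ℂ))
      volume 0 1 := by
    apply Continuous.intervalIntegrable; fun_prop
  have hi2 : IntervalIntegrable (fun t : ℝ => Complex.exp (-s * t) * ((deriv g t : ℝ) : ℂ))
      volume 0 1 := (aux_integrand_cont hg' s).intervalIntegrable _ _
  have hsub := intervalIntegral.integral_eq_sub_of_hasDerivAt key (hi1.add hi2)
  rw [h0, h1] at hsub
  simp only [Complex.ofReal_zero, mul_zero, sub_zero] at hsub
  rw [intervalIntegral.integral_add hi1 hi2] at hsub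
  have hl : (∫ t in (0:ℝ)..1, Complex.exp (-s * t) * (-s) * (g t : ℂ))
      = -s * laplaceT g s := by
    rw [laplaceT, ← intervalIntegral.integral_const_mul]
    congr 1; funext t; ring
  rw [hl] at hsub
  have : laplaceT (deriv g) s = ∫ t in (0:ℝ)..1, Complex.exp (-s * t) * ((deriv g t : ℝ) : ℂ) := rfl
  rw [this]
  linear_combination hsub

/-- Supports of iterated derivatives. -/
lemma aux_support_iter {g : ℝ → ℝ} (hsupp : Function.support g ⊆ Set.Icc 0 1) :
    ∀ m : ℕ, Function.support (deriv^[m] g) ⊆ Set.Icc 0 1 := by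
  intro m
  induction m with
  | zero => simpa using hsupp
  | succ m ih =>
    rw [Function.iterate_succ_apply']
    refine (support_deriv_subset).trans ?_
    exact closure_minimal ih isClosed_Icc

/-- Iterated integration by parts. -/
lemma aux_laplace_iter {g : ℝ → ℝ} (hg : ContDiff ℝ ∞ g)
    (hsupp : Function.support g ⊆ Set.Icc 0 1) (n : ℕ) (s : ℂ) :
    laplaceT (deriv^[n] g) s = s ^ n * laplaceT g s := by
  induction n with
  | zero => simp
  | succ n ih =>
    have hgn : ContDiff ℝ ∞ (deriv^[n] g) := hg.iterate_deriv n
    have hsn := aux_support_iter hsupp n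
    rw [Function.iterate_succ_apply',
      aux_laplace_deriv_eq hgn (aux_zero_at_zero hgn.continuous hsn)
        (aux_zero_at_one hgn.continuous hsn) s, ih, pow_succ]
    ring

/-- Iterated derivative of the Laplace transform. -/
lemma aux_iteratedDeriv {ψ : ℝ → ℝ} (hψ : Continuous ψ) (j : ℕ) :
    iteratedDeriv j (laplaceT ψ) = laplaceT (fun t => (-1) ^ j * t ^ j * ψ t) := by
  induction j with
  | zero =>
    have : (fun t : ℝ => ((-1:ℝ)) ^ 0 * t ^ 0 * ψ t) = ψ := funext fun t => by ring
    rw [iteratedDeriv_zero, this]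
  | succ j ih =>
    have hcont : Continuous (fun t : ℝ => ((-1:ℝ)) ^ j * t ^ j * ψ t) := by fun_prop
    rw [iteratedDeriv_succ, ih]
    funext s
    have hd := (aux_laplace_hasDerivAt hcont s).deriv
    rw [hd]
    have : (fun t : ℝ => -(t * (((-1:ℝ)) ^ j * t ^ j * ψ t)))
        = fun t : ℝ => ((-1:ℝ)) ^ (j+1) * t ^ (j+1) * ψ t := funext fun t => by ring
    rw [this]

end Aux

/-- let `ψ : ℝ → ℝ` be smooth with support contained in `[0,1]`. Then for
all natural numbers `j` and `n` there is a constant `c_{j,n} > 0`, independent of `s`,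
such that `|ψ̃^{(j)}(s)| ≤ c_{j,n}·|s|^{−n}` for every `s ∈ ℂ` with `Re s ≥ 0`, `s ≠ 0`. -/
theorem statement14 (ψ : ℝ → ℝ) (hψ : ContDiff ℝ (⊤ : ℕ∞) ψ)
    (hsupp : Function.support ψ ⊆ Set.Icc 0 1) (j n : ℕ) :
    ∃ c > (0 : ℝ), ∀ s : ℂ, 0 ≤ s.re → s ≠ 0 →
      ‖iteratedDeriv j (laplaceT ψ) s‖ ≤ c * ‖s‖ ^ (-(n : ℤ)) := by
  have hpsiInf : ContDiff ℝ ∞ ψ := hψ.of_le (by simp)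
  set h : ℝ → ℝ := fun t => (-1:ℝ) ^ j * t ^ j * ψ t with hh
  have hhInf : ContDiff ℝ ∞ h := by
    apply ContDiff.mul _ hpsiInf
    exact contDiff_const.mul (contDiff_id.pow j)
  have hhsupp : Function.support h ⊆ Set.Icc 0 1 := by
    intro x hx
    apply hsupp
    intro hx0
    apply hx
    simp [hh, hx0]
  have hgc : Continuous (deriv^[n] h) := (hhInf.iterate_deriv n).continuous
  obtain ⟨C, hC⟩ := isCompact_Icc.exists_bound_of_continuousOn
    (hgc.continuousOn : ContinuousOn (deriv^[n] h) (Set.Icc (0:ℝ) 1))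
  have hC0 : 0 ≤ C := le_trans (norm_nonneg _) (hC 0 ⟨le_refl 0, zero_le_one⟩)
  refine ⟨C + 1, by linarith, fun s hre hs => ?_⟩
  rw [aux_iteratedDeriv hpsiInf.continuous j]
  have hiter := aux_laplace_iter hhInf hhsupp n s
  have hlap : laplaceT h s = (s ^ n)⁻¹ * laplaceT (deriv^[n] h) s := by
    rw [hiter, ← mul_assoc, inv_mul_cancel₀ (pow_ne_zero n hs), one_mul]
  have hb : ‖laplaceT (deriv^[n] h) s‖ ≤ C + 1 := by
    apply aux_laplace_norm_le _ hre
    intro t ht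
    have := hC t ht
    rw [Real.norm_eq_abs] at this
    linarith
  have hzero : ‖s‖ ^ (-(n:ℤ)) = (‖s‖ ^ n)⁻¹ := by
    rw [zpow_neg, zpow_natCast]
  rw [← hh, hlap, hzero, norm_mul, norm_inv, norm_pow, mul_comm (C + 1)]
  exact mul_le_mul_of_nonneg_left hb (by positivity)
end

section
/- For all real numbers c₀ > 0, p, q and every natural number d there exists a constant C > 0 such that for all t > 0 and all y with 0 < y ≤ √t one has ∫_{1/t}^{1/y²} e^{−c₀·σ·t} · σ^p · (σ^{1/2}·y)^q · (1 + log(1/(σ^{1/2}·y)))^d dσ ≤ C · t^{−p−1} · (y/√t)^q · (1 + log(√t / y))^d. -/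
set_option maxHeartbeats 1000000


open MeasureTheory intervalIntegral Real

/-- The model integrand `u ^ r * exp (-(c₀ u))` is integrable on `(1, ∞)`. -/
lemma statement17_aux_integrable (c₀ r : ℝ) (hc₀ : 0 < c₀) :
    IntegrableOn (fun u : ℝ => u ^ r * Real.exp (-(c₀ * u))) (Set.Ioi 1) := by
  apply integrable_of_isBigO_exp_neg (half_pos hc₀)
  · apply ContinuousOn.mul
    · exact continuousOn_id.rpow_const fun x hx =>
        Or.inl (by have : (1:ℝ) ≤ x := hx; positivity)
    · exact (Real.continuous_exp.comp (continuous_const.mul continuous_id).neg).continuousOn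
  · have h1 := (tendsto_rpow_mul_exp_neg_mul_atTop_nhds_zero r (c₀ / 2)
      (half_pos hc₀)).isBigO_one ℝ
    have h2 := h1.mul (Asymptotics.isBigO_refl (fun u : ℝ => Real.exp (-(c₀ / 2) * u)) Filter.atTop)
    refine h2.congr (fun x => ?_) (fun x => one_mul _)
    rw [mul_assoc, ← Real.exp_add]
    ring_nf

/-- for all `c₀ > 0`, `p, q ∈ ℝ` and `d ∈ ℕ` there is `C > 0` such that for
all `t > 0` and `0 < y ≤ √t`,
`∫_{1/t}^{1/y²} e^{−c₀σt} σ^p (σ^{1/2}y)^q (1 + log(1/(σ^{1/2}y)))^d dσ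
  ≤ C · t^{−p−1} · (y/√t)^q · (1 + log(√t/y))^d`. -/
theorem statement17 (c₀ p q : ℝ) (hc₀ : 0 < c₀) (d : ℕ) :
    ∃ C > (0 : ℝ), ∀ t y : ℝ, 0 < t → 0 < y → y ≤ Real.sqrt t →
      (∫ σ in (1 / t)..(1 / y ^ 2),
          Real.exp (-(c₀ * σ * t)) * σ ^ p * (Real.sqrt σ * y) ^ q
            * (1 + Real.log (1 / (Real.sqrt σ * y))) ^ d)
        ≤ C * t ^ (-p - 1) * (y / Real.sqrt t) ^ q
            * (1 + Real.log (Real.sqrt t / y)) ^ d := by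
  set r : ℝ := p + q / 2 with hr
  set h : ℝ → ℝ := fun u => u ^ r * Real.exp (-(c₀ * u)) with hh
  have hint : IntegrableOn h (Set.Ioi 1) := statement17_aux_integrable c₀ r hc₀
  set E : ℝ := ∫ u in Set.Ioi (1:ℝ), h u with hE
  have hE0 : 0 ≤ E := setIntegral_nonneg measurableSet_Ioi fun u hu => by
    have hu1 : (1:ℝ) ≤ u := le_of_lt hu
    have hu0 : (0:ℝ) < u := by linarith
    have : (0:ℝ) ≤ u ^ r := Real.rpow_nonneg hu0.le r
    positivity
  refine ⟨E + 1, by linarith, ?_⟩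
  intro t y ht hy hyt
  have hst : 0 < Real.sqrt t := Real.sqrt_pos.2 ht
  have hy2t : y ^ 2 ≤ t := by
    have := Real.sq_sqrt ht.le
    nlinarith
  have hab : 1 / t ≤ 1 / y ^ 2 := one_div_le_one_div_of_le (by positivity) hy2t
  have hlog : 0 ≤ Real.log (Real.sqrt t / y) := by
    apply Real.log_nonneg
    rw [le_div_iff₀ hy]
    simpa using hyt
  set K : ℝ := t ^ (-p - 1) * (y / Real.sqrt t) ^ q * (1 + Real.log (Real.sqrt t / y)) ^ d
    with hK
  have hK0 : 0 ≤ K := by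
    have h1 : (0:ℝ) ≤ 1 + Real.log (Real.sqrt t / y) := by linarith
    have h2 : (0:ℝ) ≤ t ^ (-p - 1) := Real.rpow_nonneg ht.le _
    have h3 : (0:ℝ) ≤ (y / Real.sqrt t) ^ q := Real.rpow_nonneg (by positivity) _
    positivity
  set g : ℝ → ℝ := fun σ => t * h (σ * t) * K with hg
  have hpos : ∀ σ ∈ Set.Icc (1 / t) (1 / y ^ 2), 0 < σ := fun σ hσ =>
    lt_of_lt_of_le (by positivity) hσ.1
  have hsy : ∀ σ ∈ Set.Icc (1 / t) (1 / y ^ 2), 0 < Real.sqrt σ * y := fun σ hσ => by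
    have h0 := hpos σ hσ
    have h1 : 0 < Real.sqrt σ := Real.sqrt_pos.2 h0
    positivity
  -- pointwise bound
  have hbound : ∀ σ ∈ Set.Icc (1 / t) (1 / y ^ 2),
      Real.exp (-(c₀ * σ * t)) * σ ^ p * (Real.sqrt σ * y) ^ q
        * (1 + Real.log (1 / (Real.sqrt σ * y))) ^ d ≤ g σ := by
    intro σ hσ
    have hσ0 : 0 < σ := hpos σ hσ
    have hsq0 : 0 < Real.sqrt σ := Real.sqrt_pos.2 hσ0
    have hsy0 : 0 < Real.sqrt σ * y := hsy σ hσ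
    have hσt : 0 < σ * t := mul_pos hσ0 ht
    have hle1 : Real.sqrt σ * y ≤ 1 := by
      have h1 : σ ≤ 1 / y ^ 2 := hσ.2
      have h2 : Real.sqrt σ ≤ Real.sqrt (1 / y ^ 2) := Real.sqrt_le_sqrt h1
      have h3 : Real.sqrt (1 / y ^ 2) = 1 / y := by
        rw [one_div, Real.sqrt_inv, Real.sqrt_sq hy.le, one_div]
      rw [h3] at h2
      calc Real.sqrt σ * y ≤ (1 / y) * y := by nlinarith
        _ = 1 := by field_simp
    have hge : 1 / Real.sqrt t ≤ Real.sqrt σ := by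
      have h1 : 1 / t ≤ σ := hσ.1
      have h2 := Real.sqrt_le_sqrt h1
      rw [one_div]
      rwa [one_div, Real.sqrt_inv] at h2
    have hlognn : 0 ≤ Real.log (1 / (Real.sqrt σ * y)) := by
      apply Real.log_nonneg
      rw [le_one_div (by norm_num) hsy0]
      simpa using hle1
    have hlog2 : Real.log (1 / (Real.sqrt σ * y)) ≤ Real.log (Real.sqrt t / y) := by
      apply Real.log_le_log (by positivity)
      rw [div_le_div_iff₀ hsy0 hy]
      have : 1 ≤ Real.sqrt σ * Real.sqrt t := by
        have := mul_le_mul_of_nonneg_right hge hst.le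
        calc (1:ℝ) = 1 / Real.sqrt t * Real.sqrt t := by field_simp
          _ ≤ Real.sqrt σ * Real.sqrt t := by nlinarith
      nlinarith
    have hd : (1 + Real.log (1 / (Real.sqrt σ * y))) ^ d
        ≤ (1 + Real.log (Real.sqrt t / y)) ^ d :=
      pow_le_pow_left₀ (by linarith) (by linarith) d
    -- key algebraic identity
    have key : σ ^ p * (Real.sqrt σ * y) ^ q
        = t * (σ * t) ^ r * (t ^ (-p - 1) * (y / Real.sqrt t) ^ q) := by
      have e1 : (Real.sqrt σ * y) ^ q
          = Real.exp (q * (Real.log σ / 2 + Real.log y)) := by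
        rw [Real.rpow_def_of_pos hsy0, Real.log_mul hsq0.ne' hy.ne', Real.log_sqrt hσ0.le]
        ring_nf
      have e2 : σ ^ p = Real.exp (Real.log σ * p) := Real.rpow_def_of_pos hσ0 p
      have e3 : (σ * t) ^ r = Real.exp (r * (Real.log σ + Real.log t)) := by
        rw [Real.rpow_def_of_pos hσt, Real.log_mul hσ0.ne' ht.ne']
        ring_nf
      have e4 : t ^ (-p - 1) = Real.exp (Real.log t * (-p - 1)) :=
        Real.rpow_def_of_pos ht _
      have e5 : (y / Real.sqrt t) ^ q
          = Real.exp (q * (Real.log y - Real.log t / 2)) := by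
        rw [Real.rpow_def_of_pos (div_pos hy hst), Real.log_div hy.ne' hst.ne',
          Real.log_sqrt ht.le]
        ring_nf
      rw [e1, e2, e3, e4, e5]
      nth_rewrite 1 [← Real.exp_log ht]
      simp only [← Real.exp_add]
      congr 1
      simp only [hr]; ring
    have hgσ : g σ = Real.exp (-(c₀ * σ * t)) * (σ ^ p * (Real.sqrt σ * y) ^ q)
        * (1 + Real.log (Real.sqrt t / y)) ^ d := by
      rw [hg]
      simp only [hh]
      rw [key, hK]
      rw [show -(c₀ * (σ * t)) = -(c₀ * σ * t) by ring]
      ring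
    calc Real.exp (-(c₀ * σ * t)) * σ ^ p * (Real.sqrt σ * y) ^ q
          * (1 + Real.log (1 / (Real.sqrt σ * y))) ^ d
        ≤ Real.exp (-(c₀ * σ * t)) * σ ^ p * (Real.sqrt σ * y) ^ q
          * (1 + Real.log (Real.sqrt t / y)) ^ d := by
          apply mul_le_mul_of_nonneg_left hd
          have h1 : (0:ℝ) ≤ σ ^ p := Real.rpow_nonneg hσ0.le p
          have h2 : (0:ℝ) ≤ (Real.sqrt σ * y) ^ q := Real.rpow_nonneg hsy0.le q
          positivity
      _ = g σ := by rw [hgσ]; ring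
  -- integrability
  have hcf : ContinuousOn (fun σ : ℝ => Real.exp (-(c₀ * σ * t)) * σ ^ p
      * (Real.sqrt σ * y) ^ q * (1 + Real.log (1 / (Real.sqrt σ * y))) ^ d)
      (Set.Icc (1 / t) (1 / y ^ 2)) := by
    apply ContinuousOn.mul
    apply ContinuousOn.mul
    apply ContinuousOn.mul
    · exact (Real.continuous_exp.comp (by continuity)).continuousOn
    · exact continuousOn_id.rpow_const fun x hx => Or.inl (hpos x hx).ne'
    · exact (Real.continuous_sqrt.continuousOn.mul continuousOn_const).rpow_const
        fun x hx => Or.inl (hsy x hx).ne'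
    · apply ContinuousOn.pow
      apply ContinuousOn.add continuousOn_const
      apply ContinuousOn.log
      · exact continuousOn_const.div
          (Real.continuous_sqrt.continuousOn.mul continuousOn_const)
          fun x hx => (hsy x hx).ne'
      · intro x hx
        exact one_div_ne_zero (hsy x hx).ne'
  have hcg : ContinuousOn g (Set.Icc (1 / t) (1 / y ^ 2)) := by
    apply ContinuousOn.mul _ continuousOn_const
    apply ContinuousOn.mul continuousOn_const
    simp only [hh]
    apply ContinuousOn.mul
    · exact ((continuousOn_id.mul continuousOn_const).rpow_const
        fun x hx => Or.inl (mul_pos (hpos x hx) ht).ne')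
    · exact (Real.continuous_exp.comp (by continuity)).continuousOn
  have huIcc : Set.uIcc (1 / t) (1 / y ^ 2) = Set.Icc (1 / t) (1 / y ^ 2) :=
    Set.uIcc_of_le hab
  have hif : IntervalIntegrable (fun σ : ℝ => Real.exp (-(c₀ * σ * t)) * σ ^ p
      * (Real.sqrt σ * y) ^ q * (1 + Real.log (1 / (Real.sqrt σ * y))) ^ d)
      volume (1 / t) (1 / y ^ 2) := by
    apply ContinuousOn.intervalIntegrable
    rwa [huIcc]
  have hig : IntervalIntegrable g volume (1 / t) (1 / y ^ 2) := by
    apply ContinuousOn.intervalIntegrable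
    rwa [huIcc]
  have step1 : (∫ σ in (1 / t)..(1 / y ^ 2),
      Real.exp (-(c₀ * σ * t)) * σ ^ p * (Real.sqrt σ * y) ^ q
        * (1 + Real.log (1 / (Real.sqrt σ * y))) ^ d)
      ≤ ∫ σ in (1 / t)..(1 / y ^ 2), g σ :=
    intervalIntegral.integral_mono_on hab hif hig hbound
  have step2 : (∫ σ in (1 / t)..(1 / y ^ 2), g σ)
      = (∫ u in (1:ℝ)..(t / y ^ 2), h u) * K := by
    rw [hg]
    rw [intervalIntegral.integral_mul_const, intervalIntegral.integral_const_mul]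
    congr 1
    have hs := intervalIntegral.smul_integral_comp_mul_right (a := 1 / t) (b := 1 / y ^ 2) h t
    rw [smul_eq_mul] at hs
    rw [hs]
    congr 1 <;> field_simp
  have hb1 : (1:ℝ) ≤ t / y ^ 2 := (one_le_div (by positivity)).2 hy2t
  have step3 : (∫ u in (1:ℝ)..(t / y ^ 2), h u) ≤ E := by
    rw [intervalIntegral.integral_of_le hb1, hE]
    apply setIntegral_mono_set hint
    · filter_upwards [ae_restrict_mem measurableSet_Ioi] with u hu
      have hu0 : (0:ℝ) < u := lt_trans one_pos hu
      have : (0:ℝ) ≤ u ^ r := Real.rpow_nonneg hu0.le r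
      simp only [hh, Pi.zero_apply]
      positivity
    · exact (Set.Ioc_subset_Ioi_self).eventuallyLE
  calc (∫ σ in (1 / t)..(1 / y ^ 2),
      Real.exp (-(c₀ * σ * t)) * σ ^ p * (Real.sqrt σ * y) ^ q
        * (1 + Real.log (1 / (Real.sqrt σ * y))) ^ d)
      ≤ (∫ u in (1:ℝ)..(t / y ^ 2), h u) * K := by rw [← step2]; exact step1
    _ ≤ (E + 1) * K := by nlinarith
    _ = (E + 1) * t ^ (-p - 1) * (y / Real.sqrt t) ^ q
        * (1 + Real.log (Real.sqrt t / y)) ^ d := by rw [hK]; ring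
end

section
/- For all real numbers c₀ > 0, p and m ≥ 0 there exists a constant C > 0 such that for all t > 0 and all y with 0 < y ≤ √t one has ∫_{1/y²}^{∞} e^{−c₀·σ·t} · σ^p · (σ^{1/2}·y)^{m−1} dσ ≤ C · t^{−p−1} · (y/√t)^{m+1}. -/
open MeasureTheory Real

/-!
Write `σ ^ p (√σ y) ^ (m - 1) = σ ^ q y ^ (m - 1)` with `q = p + (m - 1) / 2`. On the domain,
`tσ ≥ t / y² ≥ 1`, so half of the exponential absorbs the power:
`σ ^ q e^{-c₀σt/2} = t ^ (-q) (tσ) ^ q e^{-c₀(tσ)/2} ≤ A t ^ (-q)` with `A` depending only on `q, c₀`.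
What is left is `∫_a^∞ e^{-bσ} dσ = e^{-ab} / b ≤ 1 / (a b²)` with `a = 1 / y²`, `b = c₀t/2`,
which produces exactly the factor `y² / t²` needed on the right-hand side.
-/

open Set Nat

lemma rpow_mul_exp_neg_mul_le (q : ℝ) {c x : ℝ} (hc : 0 < c) (hx : 1 ≤ x) :
    x ^ q * exp (-(c * x)) ≤ (⌈q⌉₊)! / c ^ ⌈q⌉₊ := by
  set n := ⌈q⌉₊
  have hpow : x ^ q ≤ x ^ n := by
    simpa using rpow_le_rpow_of_exponent_le hx (le_ceil q)
  have hexp : (c * x) ^ n / n ! ≤ exp (c * x) := Real.pow_div_factorial_le_exp _ (by positivity) n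
  rw [div_le_iff₀ (by positivity)] at hexp
  rw [le_div_iff₀ (by positivity), exp_neg]
  calc x ^ q * (exp (c * x))⁻¹ * c ^ n
      ≤ x ^ n * (exp (c * x))⁻¹ * c ^ n := by gcongr
    _ = (c * x) ^ n * (exp (c * x))⁻¹ := by ring
    _ ≤ (n ! : ℝ) := by
      rw [← div_eq_mul_inv, div_le_iff₀ (exp_pos _)]
      linarith

lemma integral_exp_neg_mul_Ioi (a : ℝ) {b : ℝ} (hb : 0 < b) :
    ∫ x in Ioi a, exp (-(b * x)) = exp (-(b * a)) / b := by
  simpa only [neg_mul, neg_div_neg_eq] using integral_exp_mul_Ioi (neg_lt_zero.2 hb) a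

lemma setIntegral_Ioi_le_of_le_mul_exp_neg_mul {f : ℝ → ℝ} {a b K : ℝ} (ha : 0 < a)
    (hb : 0 < b) (hf_nonneg : ∀ x ∈ Ioi a, 0 ≤ f x)
    (hf_le : ∀ x ∈ Ioi a, f x ≤ K * exp (-(b * x))) :
    ∫ x in Ioi a, f x ≤ K / (a * b ^ 2) := by
  have haa : a + 1 ∈ Ioi a := by simp
  have hK : 0 ≤ K :=
    nonneg_of_mul_nonneg_left ((hf_nonneg _ haa).trans (hf_le _ haa)) (exp_pos _)
  have hexp : exp (-(b * a)) ≤ (b * a)⁻¹ := by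
    rw [exp_neg]
    exact inv_anti₀ (by positivity) ((le_add_of_nonneg_right zero_le_one).trans
      (add_one_le_exp _))
  have hg : IntegrableOn (fun x => K * exp (-(b * x))) (Ioi a) := by
    simpa only [neg_mul, IntegrableOn] using (exp_neg_integrableOn_Ioi a hb).const_mul K
  calc ∫ x in Ioi a, f x
      ≤ ∫ x in Ioi a, K * exp (-(b * x)) :=
        integral_mono_of_nonneg (ae_restrict_of_forall_mem measurableSet_Ioi hf_nonneg) hg
          (ae_restrict_of_forall_mem measurableSet_Ioi hf_le)
    _ = K * (exp (-(b * a)) / b) := by rw [integral_const_mul, integral_exp_neg_mul_Ioi a hb]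
    _ ≤ K * ((b * a)⁻¹ / b) := by gcongr
    _ = K / (a * b ^ 2) := by field_simp

lemma rpow_mul_rpow_sqrt_mul {σ : ℝ} (p r : ℝ) {y : ℝ} (hσ : 0 < σ) (hy : 0 ≤ y) :
    σ ^ p * (√σ * y) ^ r = σ ^ (p + r / 2) * y ^ r := by
  rw [mul_rpow (sqrt_nonneg σ) hy, sqrt_eq_rpow, ← rpow_mul hσ.le, rpow_add hσ]
  ring_nf

lemma exp_neg_mul_mul_rpow_le (q : ℝ) {c t σ : ℝ} (hc : 0 < c) (ht : 0 < t)
    (htσ : 1 ≤ t * σ) :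
    exp (-(c * σ * t)) * σ ^ q
      ≤ (⌈q⌉₊)! / (c / 2) ^ ⌈q⌉₊ * t ^ (-q) * exp (-(c * t / 2 * σ)) := by
  have hσ : 0 < σ := pos_of_mul_pos_right (one_pos.trans_le htσ) ht.le
  have hsplit : σ ^ q = t ^ (-q) * (t * σ) ^ q := by
    rw [mul_rpow ht.le hσ.le, ← mul_assoc, ← rpow_add ht, neg_add_cancel, rpow_zero, one_mul]
  have hexp : exp (-(c * σ * t)) = exp (-(c / 2 * (t * σ))) * exp (-(c * t / 2 * σ)) := by
    rw [← exp_add]; ring_nf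
  calc exp (-(c * σ * t)) * σ ^ q
      = (t * σ) ^ q * exp (-(c / 2 * (t * σ))) * t ^ (-q) * exp (-(c * t / 2 * σ)) := by
        rw [hsplit, hexp]; ring
    _ ≤ (⌈q⌉₊)! / (c / 2) ^ ⌈q⌉₊ * t ^ (-q) * exp (-(c * t / 2 * σ)) := by
        gcongr
        exact rpow_mul_exp_neg_mul_le q (half_pos hc) htσ

lemma exp_neg_mul_rpow_mul_rpow_sqrt_mul_le (p r : ℝ) {c t y σ : ℝ} (hc : 0 < c) (ht : 0 < t)
    (hy : 0 ≤ y) (htσ : 1 ≤ t * σ) :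
    exp (-(c * σ * t)) * σ ^ p * (√σ * y) ^ r
      ≤ (⌈p + r / 2⌉₊)! / (c / 2) ^ ⌈p + r / 2⌉₊ * (t ^ (-(p + r / 2)) * y ^ r)
        * exp (-(c * t / 2 * σ)) := by
  have hσ : 0 < σ := pos_of_mul_pos_right (one_pos.trans_le htσ) ht.le
  have := exp_neg_mul_mul_rpow_le (p + r / 2) hc ht htσ
  calc exp (-(c * σ * t)) * σ ^ p * (√σ * y) ^ r
      = exp (-(c * σ * t)) * σ ^ (p + r / 2) * y ^ r := by
        rw [mul_assoc (exp _), rpow_mul_rpow_sqrt_mul p r hσ hy, ← mul_assoc]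
    _ ≤ (⌈p + r / 2⌉₊)! / (c / 2) ^ ⌈p + r / 2⌉₊ * t ^ (-(p + r / 2))
          * exp (-(c * t / 2 * σ)) * y ^ r := by gcongr
    _ = _ := by ring

lemma rpow_neg_mul_rpow_div_eq {c t y : ℝ} (p m : ℝ) (hc : c ≠ 0) (ht : 0 < t) (hy : 0 < y) :
    t ^ (-(p + (m - 1) / 2)) * y ^ (m - 1) / (1 / y ^ 2 * (c * t / 2) ^ 2)
      = 4 / c ^ 2 * t ^ (-p - 1) * (y / √t) ^ (m + 1) := by
  have hy2 : y ^ (m + 1) = y ^ (m - 1) * y ^ 2 := by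
    rw [← rpow_natCast, ← rpow_add hy]; ring_nf
  have ht2 : t ^ (-(p + (m - 1) / 2)) = t ^ (-p - 1) * t ^ (-(1 / 2 * (m + 1))) * t ^ 2 := by
    rw [← rpow_natCast, ← rpow_add ht, ← rpow_add ht]; congr 1; push_cast; ring
  rw [div_rpow hy.le (sqrt_nonneg t), sqrt_eq_rpow, ← rpow_mul ht.le, hy2, ht2, rpow_neg ht.le]
  field_simp
  norm_num

theorem statement18_general (c₀ p m : ℝ) (hc₀ : 0 < c₀) :
    ∃ C > (0 : ℝ), ∀ t y : ℝ, 0 < t → 0 < y → y ≤ Real.sqrt t →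
      (∫ σ in Set.Ioi (1 / y ^ 2),
          Real.exp (-(c₀ * σ * t)) * σ ^ p * (Real.sqrt σ * y) ^ (m - 1))
        ≤ C * t ^ (-p - 1) * (y / Real.sqrt t) ^ (m + 1) := by
  set q := p + (m - 1) / 2
  set A : ℝ := (⌈q⌉₊)! / (c₀ / 2) ^ ⌈q⌉₊
  refine ⟨4 * A / c₀ ^ 2, by positivity, fun t y ht hy hyt => ?_⟩
  have htσ : ∀ σ ∈ Ioi (1 / y ^ 2), 1 ≤ t * σ := fun σ hσ => by
    have hyσ : 1 < y ^ 2 * σ := by rwa [mem_Ioi, div_lt_iff₀' (by positivity)] at hσ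
    have hσ0 : 0 < σ := pos_of_mul_pos_right (one_pos.trans hyσ) (by positivity)
    exact hyσ.le.trans (by gcongr; exact (le_sqrt hy.le ht.le).1 hyt)
  calc ∫ σ in Ioi (1 / y ^ 2), exp (-(c₀ * σ * t)) * σ ^ p * (√σ * y) ^ (m - 1)
      ≤ A * (t ^ (-q) * y ^ (m - 1)) / (1 / y ^ 2 * (c₀ * t / 2) ^ 2) := by
        refine setIntegral_Ioi_le_of_le_mul_exp_neg_mul (by positivity) (by positivity)
          (fun σ hσ => ?_) fun σ hσ =>
            exp_neg_mul_rpow_mul_rpow_sqrt_mul_le p (m - 1) hc₀ ht hy.le (htσ σ hσ)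
        have : 0 < σ := pos_of_mul_pos_right (one_pos.trans_le (htσ σ hσ)) ht.le
        positivity
    _ = 4 * A / c₀ ^ 2 * t ^ (-p - 1) * (y / √t) ^ (m + 1) := by
        rw [mul_div_assoc, rpow_neg_mul_rpow_div_eq p m hc₀.ne' ht hy]; ring

/-- for all `c₀ > 0`, `p ∈ ℝ` and `m ≥ 0` there is `C > 0` such that for all
`t > 0` and `0 < y ≤ √t`,
`∫_{1/y²}^{∞} e^{−c₀σt} σ^p (σ^{1/2}y)^{m−1} dσ ≤ C · t^{−p−1} · (y/√t)^{m+1}`. -/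
theorem statement18 (c₀ p m : ℝ) (hc₀ : 0 < c₀) (hm : 0 ≤ m) :
    ∃ C > (0 : ℝ), ∀ t y : ℝ, 0 < t → 0 < y → y ≤ Real.sqrt t →
      (∫ σ in Set.Ioi (1 / y ^ 2),
          Real.exp (-(c₀ * σ * t)) * σ ^ p * (Real.sqrt σ * y) ^ (m - 1))
        ≤ C * t ^ (-p - 1) * (y / Real.sqrt t) ^ (m + 1) :=
  statement18_general c₀ p m hc₀
end
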